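/- arXiv:1801.02861 — 2 statements merged into one kernel-verified Lean document; each statement's English description precedes it below -/
import Mathlib

section
/- Let γ be a private state on AA'BB' built from orthogonal shield states σ^± on A'B' as γ = (ψ⁺ ⊗ σ⁺ + ψ⁻ ⊗ σ⁻)/2, and let γ̂ be its key-attacked version (ψ⁺ + ψ⁻)/4 ⊗ (σ⁺ + σ⁻). Then ‖γ − γ̂‖_{SEP} ≤ (3/2)·‖σ⁺ − σ⁻‖_{SEP(A':B')} and ‖γ − γ̂‖_{PPT} ≤ ‖σ⁺ − σ⁻‖_{PPT(A':B')}. -/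
open scoped BigOperators ComplexOrder

noncomputable section

/-- A POVM (measurement) on a finite-dimensional space. -/
structure POVM (ι : Type) [Fintype ι] [DecidableEq ι] where
  k : ℕ
  T : Fin k → Matrix ι ι ℂ
  pos : ∀ i, (T i).PosSemidef
  sum_eq : ∑ i, T i = 1

/-- The ℓ1 norm of the outcome vector of the measurement `P` applied to `X`. -/
def mval {ι : Type} [Fintype ι] [DecidableEq ι] (P : POVM ι) (X : Matrix ι ι ℂ) : ℝ :=
  ∑ i, ‖(P.T i * X).trace‖

/-- Tensor (product) of an operator on `α` and one on `β`. -/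
def prodOp {α β : Type} (x : Matrix α α ℂ) (y : Matrix β β ℂ) : Matrix (α × β) (α × β) ℂ :=
  fun p q => x p.1 q.1 * y p.2 q.2

/-- The set of separable states across the cut `α : β`. -/
def SepStates (α β : Type) [Fintype α] [Fintype β] : Set (Matrix (α × β) (α × β) ℂ) :=
  convexHull ℝ {σ : Matrix (α × β) (α × β) ℂ |
    ∃ (x : Matrix α α ℂ) (y : Matrix β β ℂ),
      x.PosSemidef ∧ x.trace = 1 ∧ y.PosSemidef ∧ y.trace = 1 ∧ σ = prodOp x y}

/-- The cone generated by separable states. -/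
def SepCone (α β : Type) [Fintype α] [Fintype β] : Set (Matrix (α × β) (α × β) ℂ) :=
  {T | ∃ (t : ℝ) (σ : Matrix (α × β) (α × β) ℂ), 0 ≤ t ∧ σ ∈ SepStates α β ∧ T = t • σ}

/-- Partial transposition (on the second factor). -/
def ptranspose {α β : Type} (ρ : Matrix (α × β) (α × β) ℂ) : Matrix (α × β) (α × β) ℂ :=
  fun p q => ρ (p.1, q.2) (q.1, p.2)

/-- The trace norm restricted to separable measurements (POVMs whose elements lie in the
cone generated by separable states). -/
def sepNorm {α β : Type} [Fintype α] [DecidableEq α] [Fintype β] [DecidableEq β]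
    (X : Matrix (α × β) (α × β) ℂ) : ℝ :=
  sSup {r : ℝ | ∃ P : POVM (α × β), (∀ i, P.T i ∈ SepCone α β) ∧ r = mval P X}

/-- The trace norm restricted to PPT measurements (POVMs whose elements have positive
semidefinite partial transpose). -/
def pptNorm {α β : Type} [Fintype α] [DecidableEq α] [Fintype β] [DecidableEq β]
    (X : Matrix (α × β) (α × β) ℂ) : ℝ :=
  sSup {r : ℝ | ∃ P : POVM (α × β), (∀ i, (ptranspose (P.T i)).PosSemidef) ∧ r = mval P X}

/-- Tensor product of a bipartite operator on `C:D` with one on `A':B'`, arranged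
according to the bipartite cut `CA' : DB'`. -/
def tensorBip {α β γ δ : Type} (Y : Matrix (α × β) (α × β) ℂ) (X : Matrix (γ × δ) (γ × δ) ℂ) :
    Matrix ((α × γ) × (β × δ)) ((α × γ) × (β × δ)) ℂ :=
  fun p q => Y (p.1.1, p.2.1) (q.1.1, q.2.1) * X (p.1.2, p.2.2) (q.1.2, q.2.2)

/-- The two-qubit Bell states `ψ^± = (|00⟩ ± |11⟩)(⟨00| ± ⟨11|)/2`, with sign `s = ±1`. -/
def bellSign (s : ℝ) : Matrix (Fin 2 × Fin 2) (Fin 2 × Fin 2) ℂ :=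
  fun p q => if p.1 = p.2 ∧ q.1 = q.2 then
    ((2:ℂ))⁻¹ * (if p.1 = 1 then (s : ℂ) else 1) * (if q.1 = 1 then (s : ℂ) else 1) else 0

/-- The private state `γ = (ψ⁺ ⊗ σ⁺ + ψ⁻ ⊗ σ⁻)/2` on `AA' : BB'`. -/
def privateState {α β : Type} (σp σm : Matrix (α × β) (α × β) ℂ) :
    Matrix ((Fin 2 × α) × (Fin 2 × β)) ((Fin 2 × α) × (Fin 2 × β)) ℂ :=
  (2:ℝ)⁻¹ • (tensorBip (bellSign 1) σp + tensorBip (bellSign (-1)) σm)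

/-- The key-attacked state `γ̂ = (ψ⁺ + ψ⁻)/4 ⊗ (σ⁺ + σ⁻)`. -/
def keyAttacked {α β : Type} (σp σm : Matrix (α × β) (α × β) ℂ) :
    Matrix ((Fin 2 × α) × (Fin 2 × β)) ((Fin 2 × α) × (Fin 2 × β)) ℂ :=
  (4:ℝ)⁻¹ • tensorBip (bellSign 1 + bellSign (-1)) (σp + σm)


/-!
Write `D = ψ⁺ - ψ⁻ = |00⟩⟨11| + |11⟩⟨00|`, so that `γ - γ̂ = ¼ D ⊗ (σ⁺ - σ⁻)`. Both `1 + D` and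
`1 - D` are separable (phase twirls of product projectors), hence also PSD and PPT. A measurement
`{Tᵢ}` on `AA' : BB'` therefore induces the measurement
`{Tr_{AB}[((1 ± D) ⊗ 1) Tᵢ] / 8}` on `A' : B'`, which is separable (resp. PPT) when `{Tᵢ}` is,
and since `Tr[Tᵢ (¼ D ⊗ X)]` is the difference of the two induced outcome probabilities on `X`,
the triangle inequality bounds the statistics of `{Tᵢ}` on `γ - γ̂` by those of the induced
measurement on `σ⁺ - σ⁻`.
-/

open Matrix

theorem prodOp_smul_smul {γ δ : Type} (s t : ℝ) (x : Matrix γ γ ℂ) (y : Matrix δ δ ℂ) :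
    prodOp (s • x) (t • y) = (s * t) • prodOp x y := by
  ext p q
  simp only [prodOp, Matrix.smul_apply, Complex.real_smul, Complex.ofReal_mul]
  ring

theorem ptranspose_smul {γ δ : Type} (t : ℝ) (M : Matrix (γ × δ) (γ × δ) ℂ) :
    ptranspose (t • M) = t • ptranspose M :=
  rfl

section SepCone

variable {γ δ : Type} [Fintype γ] [Fintype δ]

theorem smul_mem_sepCone {t : ℝ} (ht : 0 ≤ t) {M : Matrix (γ × δ) (γ × δ) ℂ}
    (hM : M ∈ SepCone γ δ) : t • M ∈ SepCone γ δ := by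
  obtain ⟨s, σ, hs, hσ, rfl⟩ := hM
  exact ⟨t * s, σ, mul_nonneg ht hs, hσ, by rw [smul_smul]⟩

theorem add_mem_sepCone {M N : Matrix (γ × δ) (γ × δ) ℂ}
    (hM : M ∈ SepCone γ δ) (hN : N ∈ SepCone γ δ) : M + N ∈ SepCone γ δ := by
  obtain ⟨s, σ, hs, hσ, rfl⟩ := hM
  obtain ⟨t, τ, ht, hτ, rfl⟩ := hN
  rcases (add_nonneg hs ht).eq_or_lt with hst | hst
  · obtain ⟨rfl, rfl⟩ := (add_eq_zero_iff_of_nonneg hs ht).mp hst.symm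
    exact ⟨0, σ, le_rfl, hσ, by simp⟩
  · refine ⟨s + t, (s / (s + t)) • σ + (t / (s + t)) • τ, hst.le,
      convex_convexHull ℝ _ hσ hτ (by positivity) (by positivity) (by field_simp), ?_⟩
    rw [smul_add, smul_smul, smul_smul, mul_div_cancel₀ _ hst.ne', mul_div_cancel₀ _ hst.ne']

theorem convex_sepCone : Convex ℝ (SepCone γ δ) := fun _ hM _ hN _ _ ha hb _ =>
  add_mem_sepCone (smul_mem_sepCone ha hM) (smul_mem_sepCone hb hN)

theorem sepCone_subset {S : Set (Matrix (γ × δ) (γ × δ) ℂ)}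
    (hadd : ∀ M ∈ S, ∀ N ∈ S, M + N ∈ S) (hsmul : ∀ t : ℝ, 0 ≤ t → ∀ M ∈ S, t • M ∈ S)
    (hprod : ∀ (x : Matrix γ γ ℂ) (y : Matrix δ δ ℂ), x.PosSemidef → x.trace = 1 →
      y.PosSemidef → y.trace = 1 → prodOp x y ∈ S) :
    SepCone γ δ ⊆ S := by
  rintro _ ⟨t, σ, ht, hσ, rfl⟩
  refine hsmul t ht σ (convexHull_min ?_ (fun _ hM _ hN _ _ ha hb _ => ?_) hσ)
  · rintro _ ⟨x, y, hx, hxtr, hy, hytr, rfl⟩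
    exact hprod x y hx hxtr hy hytr
  · exact hadd _ (hsmul _ ha _ hM) _ (hsmul _ hb _ hN)

theorem Matrix.PosSemidef.exists_nonneg_smul_trace_one [DecidableEq γ] [Nonempty γ]
    {x : Matrix γ γ ℂ} (hx : x.PosSemidef) :
    ∃ t : ℝ, 0 ≤ t ∧ ∃ ρ : Matrix γ γ ℂ, ρ.PosSemidef ∧ ρ.trace = 1 ∧ x = t • ρ := by
  have htr : x.trace = (x.trace.re : ℂ) :=
    Complex.eq_re_of_ofReal_le (r := 0) (by rw [Complex.ofReal_zero]; exact hx.trace_nonneg)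
  rcases (Complex.nonneg_iff.mp hx.trace_nonneg).1.eq_or_lt with h0 | hpos
  · refine ⟨0, le_rfl, (Fintype.card γ : ℝ)⁻¹ • 1, PosSemidef.one.smul (by positivity), ?_, ?_⟩
    · simp [trace_smul, trace_one, Complex.real_smul]
    · rw [zero_smul, ← hx.trace_eq_zero_iff, htr, ← h0, Complex.ofReal_zero]
  · refine ⟨x.trace.re, hpos.le, x.trace.re⁻¹ • x, hx.smul (by positivity), ?_, ?_⟩
    · rw [trace_smul, htr, Complex.real_smul, Complex.ofReal_re, ← Complex.ofReal_mul,
        inv_mul_cancel₀ hpos.ne', Complex.ofReal_one]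
    · rw [smul_smul, mul_inv_cancel₀ hpos.ne', one_smul]

theorem prodOp_mem_sepCone [DecidableEq γ] [DecidableEq δ] [Nonempty γ] [Nonempty δ]
    {x : Matrix γ γ ℂ} {y : Matrix δ δ ℂ} (hx : x.PosSemidef) (hy : y.PosSemidef) :
    prodOp x y ∈ SepCone γ δ := by
  obtain ⟨s, hs, ρ, hρ, hρtr, rfl⟩ := hx.exists_nonneg_smul_trace_one
  obtain ⟨t, ht, τ, hτ, hτtr, rfl⟩ := hy.exists_nonneg_smul_trace_one
  exact prodOp_smul_smul s t ρ τ ▸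
    ⟨s * t, _, mul_nonneg hs ht, subset_convexHull ℝ _ ⟨ρ, τ, hρ, hρtr, hτ, hτtr, rfl⟩, rfl⟩

theorem Matrix.PosSemidef.of_mem_sepCone {M : Matrix (γ × δ) (γ × δ) ℂ}
    (hM : M ∈ SepCone γ δ) : M.PosSemidef :=
  sepCone_subset (S := {M | M.PosSemidef}) (fun _ hM _ hN => hM.add hN)
    (fun _ ht _ hM => hM.smul ht) (fun _ _ hx _ hy _ => hx.kronecker hy) hM

theorem ptranspose_posSemidef_of_mem_sepCone {M : Matrix (γ × δ) (γ × δ) ℂ}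
    (hM : M ∈ SepCone γ δ) : (ptranspose M).PosSemidef :=
  sepCone_subset (S := {M | (ptranspose M).PosSemidef}) (fun _ hM _ hN => hM.add hN)
    (fun _ ht _ hM => hM.smul ht) (fun _ _ hx _ hy _ => hx.kronecker hy.transpose) hM

end SepCone

section KeyTrace

/-- `traceLeftWith m x = Tr_κ[(m ⊗ 1) x]`. -/
def traceLeftWith {κ γ : Type} [Fintype κ] (m : Matrix κ κ ℂ) (x : Matrix (κ × γ) (κ × γ) ℂ) :
    Matrix γ γ ℂ :=
  of fun a a' => ∑ c, ∑ c', m c' c * x (c, a) (c', a')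

theorem Matrix.PosSemidef.traceLeftWith {κ γ : Type} [Fintype κ] [Fintype γ] [DecidableEq γ]
    {m : Matrix κ κ ℂ} {x : Matrix (κ × γ) (κ × γ) ℂ} (hm : m.PosSemidef) (hx : x.PosSemidef) :
    (traceLeftWith m x).PosSemidef := by
  obtain ⟨k, v, rfl⟩ := posSemidef_iff_eq_sum_vecMulVec.mp hm
  let J : Fin k → Matrix γ (κ × γ) ℂ := fun i =>
    of fun a q => if q.2 = a then star (v i q.1) else 0
  have hJ : _root_.traceLeftWith (∑ i, vecMulVec (v i) (star (v i))) x =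
      ∑ i, J i * x * (J i)ᴴ := by
    ext a a'
    simp only [_root_.traceLeftWith, J, of_apply, Matrix.sum_apply, Matrix.mul_apply,
      conjTranspose_apply, vecMulVec_apply, Fintype.sum_prod_type, apply_ite star, star_star,
      star_zero, mul_ite, mul_zero, ite_mul, zero_mul, Finset.sum_ite_eq', Finset.mem_univ,
      if_true, Finset.sum_mul, Pi.star_apply]
    rw [Finset.sum_comm_cycle]
    refine Finset.sum_congr rfl fun i _ => ?_
    rw [Finset.sum_comm]
    simp only [mul_comm, mul_left_comm]
  rw [hJ]
  exact posSemidef_sum _ fun i _ => hx.mul_mul_conjTranspose_same (J i)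

variable {κ₁ κ₂ α β : Type} [Fintype κ₁] [Fintype κ₂]

/-- `keyTrace M T = Tr_{κ₁κ₂}[(M ⊗ 1) T]` for `T` on `κ₁α : κ₂β`. -/
def keyTrace : Matrix (κ₁ × κ₂) (κ₁ × κ₂) ℂ →ₗ[ℂ]
    Matrix ((κ₁ × α) × (κ₂ × β)) ((κ₁ × α) × (κ₂ × β)) ℂ →ₗ[ℂ] Matrix (α × β) (α × β) ℂ :=
  LinearMap.mk₂ ℂ (fun M T => traceLeftWith M (T.submatrix (Equiv.prodProdProdComm κ₁ κ₂ α β)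
      (Equiv.prodProdProdComm κ₁ κ₂ α β)))
    (fun _ _ _ => by ext; simp [traceLeftWith, add_mul, Finset.sum_add_distrib])
    (fun _ _ _ => by ext; simp [traceLeftWith, mul_assoc, Finset.mul_sum])
    (fun _ _ _ => by ext; simp [traceLeftWith, mul_add, Finset.sum_add_distrib])
    (fun _ _ _ => by ext; simp [traceLeftWith, mul_left_comm, Finset.mul_sum])

theorem keyTrace_apply (M : Matrix (κ₁ × κ₂) (κ₁ × κ₂) ℂ)
    (T : Matrix ((κ₁ × α) × (κ₂ × β)) ((κ₁ × α) × (κ₂ × β)) ℂ) (p q : α × β) :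
    keyTrace M T p q =
      ∑ c, ∑ c', M c' c * T ((c.1, p.1), (c.2, p.2)) ((c'.1, q.1), (c'.2, q.2)) :=
  rfl

theorem Matrix.PosSemidef.keyTrace [Fintype α] [Fintype β] [DecidableEq α] [DecidableEq β]
    {M : Matrix (κ₁ × κ₂) (κ₁ × κ₂) ℂ} {T : Matrix ((κ₁ × α) × (κ₂ × β)) ((κ₁ × α) × (κ₂ × β)) ℂ}
    (hM : M.PosSemidef) (hT : T.PosSemidef) : (_root_.keyTrace M T).PosSemidef :=
  hM.traceLeftWith (hT.submatrix _)

theorem keyTrace_prodOp_prodOp (m : Matrix κ₁ κ₁ ℂ) (n : Matrix κ₂ κ₂ ℂ)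
    (x : Matrix (κ₁ × α) (κ₁ × α) ℂ) (y : Matrix (κ₂ × β) (κ₂ × β) ℂ) :
    keyTrace (prodOp m n) (prodOp x y) = prodOp (traceLeftWith m x) (traceLeftWith n y) := by
  ext p q
  simp only [keyTrace_apply, prodOp, traceLeftWith, of_apply, Fintype.sum_prod_type,
    Finset.sum_mul_sum]
  simp only [mul_left_comm, mul_assoc]

theorem ptranspose_keyTrace (M : Matrix (κ₁ × κ₂) (κ₁ × κ₂) ℂ)
    (T : Matrix ((κ₁ × α) × (κ₂ × β)) ((κ₁ × α) × (κ₂ × β)) ℂ) :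
    ptranspose (keyTrace M T) = keyTrace (ptranspose M) (ptranspose T) := by
  ext p q
  simp only [keyTrace_apply, ptranspose, Fintype.sum_prod_type]
  refine Finset.sum_congr rfl fun c _ => ?_
  rw [Finset.sum_comm]
  conv_lhs => arg 2; ext d'; rw [Finset.sum_comm]
  rw [Finset.sum_comm]

theorem trace_keyTrace_mul [Fintype α] [Fintype β] (M : Matrix (κ₁ × κ₂) (κ₁ × κ₂) ℂ)
    (T : Matrix ((κ₁ × α) × (κ₂ × β)) ((κ₁ × α) × (κ₂ × β)) ℂ) (X : Matrix (α × β) (α × β) ℂ) :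
    (keyTrace M T * X).trace = (T * tensorBip M X).trace := by
  let e := Equiv.prodProdProdComm κ₁ κ₂ α β
  simp only [trace, diag_apply, mul_apply, keyTrace_apply, Finset.sum_mul]
  rw [← e.sum_comp]
  simp_rw [← e.sum_comp (fun Q => T _ Q * _),
    Fintype.sum_prod_type (f := fun cp : (κ₁ × κ₂) × (α × β) => _)]
  simp only [tensorBip, e, Equiv.prodProdProdComm_apply]
  symm
  rw [Finset.sum_comm]
  refine Finset.sum_congr rfl fun p _ => ?_
  rw [Finset.sum_comm_cycle]
  simp only [Prod.mk.eta, mul_comm, mul_left_comm, mul_assoc]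

theorem keyTrace_one_one [DecidableEq κ₁] [DecidableEq κ₂] [DecidableEq α] [DecidableEq β] :
    keyTrace (1 : Matrix (κ₁ × κ₂) (κ₁ × κ₂) ℂ) (1 : Matrix ((κ₁ × α) × (κ₂ × β)) _ ℂ) =
      (Fintype.card (κ₁ × κ₂) : ℂ) • 1 := by
  ext p q
  by_cases h : p = q
  · subst h
    simp [keyTrace_apply, one_apply, ← Prod.ext_iff]
  · rw [keyTrace_apply, Matrix.smul_apply, one_apply_ne h, smul_zero]
    refine Finset.sum_eq_zero fun c _ => Finset.sum_eq_zero fun c' _ => ?_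
    have hne : ((c.1, p.1), c.2, p.2) ≠ ((c'.1, q.1), c'.2, q.2) := fun heq =>
      h (Prod.ext (congrArg (·.1.2) heq) (congrArg (·.2.2) heq))
    rw [one_apply_ne hne, mul_zero]

theorem nonempty_of_trace_eq_one {ι : Type} [Fintype ι] {x : Matrix ι ι ℂ} (hx : x.trace = 1) :
    Nonempty ι := by
  by_contra h
  rw [not_nonempty_iff] at h
  exact zero_ne_one (trace_eq_zero_of_isEmpty x ▸ hx)

theorem keyTrace_mem_sepCone [Fintype α] [Fintype β] [DecidableEq κ₁] [DecidableEq κ₂]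
    [DecidableEq α] [DecidableEq β]
    {M : Matrix (κ₁ × κ₂) (κ₁ × κ₂) ℂ} {T : Matrix ((κ₁ × α) × (κ₂ × β)) ((κ₁ × α) × (κ₂ × β)) ℂ}
    (hM : M ∈ SepCone κ₁ κ₂) (hT : T ∈ SepCone (κ₁ × α) (κ₂ × β)) :
    keyTrace M T ∈ SepCone α β := by
  refine sepCone_subset (S := {T | keyTrace M T ∈ SepCone α β})
    (fun _ h₁ _ h₂ => by simpa using add_mem_sepCone h₁ h₂)
    (fun t ht _ h => by simpa using smul_mem_sepCone ht h) ?_ hT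
  intro x y hx hxtr hy hytr
  have : Nonempty α := (nonempty_of_trace_eq_one hxtr).map Prod.snd
  have : Nonempty β := (nonempty_of_trace_eq_one hytr).map Prod.snd
  refine sepCone_subset (S := {M | keyTrace M (prodOp x y) ∈ SepCone α β})
    (fun _ h₁ _ h₂ => by simpa using add_mem_sepCone h₁ h₂)
    (fun t ht _ h => by simpa using smul_mem_sepCone ht h) ?_ hM
  intro m n hm _ hn _
  rw [Set.mem_ofPred_eq, keyTrace_prodOp_prodOp]
  exact prodOp_mem_sepCone (hm.traceLeftWith hx) (hn.traceLeftWith hy)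

end KeyTrace

section Measurement

theorem Matrix.PosSemidef.norm_apply_le_trace {ι : Type} [Fintype ι] {T : Matrix ι ι ℂ}
    (hT : T.PosSemidef) (p q : ι) :
    ‖T p q‖ ≤ T.trace.re := by
  have hreal : ∀ r, T r r = (T r r).re := fun r =>
    Complex.eq_re_of_ofReal_le (r := 0) (by rw [Complex.ofReal_zero]; exact hT.diag_nonneg)
  have hdiag : ∀ r, 0 ≤ (T r r).re ∧ (T r r).re ≤ T.trace.re := fun r =>
    ⟨(Complex.nonneg_iff.mp hT.diag_nonneg).1, by
      rw [trace, Complex.re_sum]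
      exact Finset.single_le_sum (f := fun r => (T r r).re)
        (fun r _ => (Complex.nonneg_iff.mp hT.diag_nonneg).1) (Finset.mem_univ r)⟩
  -- the principal 2 × 2 minor on `{p, q}` is nonnegative
  have hminor : ‖T p q‖ ^ 2 ≤ (T p p).re * (T q q).re := by
    have hdet := Complex.nonneg_iff.mp ((hT.submatrix ![p, q]).det_nonneg)
    rw [det_fin_two] at hdet
    simp only [submatrix_apply, Matrix.cons_val_zero, Matrix.cons_val_one,
      ← hT.1.apply q p] at hdet
    rw [hreal p, hreal q, RCLike.star_def, Complex.mul_conj'] at hdet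
    simpa [← Complex.ofReal_mul, ← Complex.ofReal_pow] using hdet.1
  obtain ⟨hp0, hp⟩ := hdiag p
  obtain ⟨hq0, hq⟩ := hdiag q
  nlinarith [norm_nonneg (T p q)]

variable {ι : Type} [Fintype ι] [DecidableEq ι]

theorem mval_nonneg (P : POVM ι) (X : Matrix ι ι ℂ) : 0 ≤ mval P X :=
  Finset.sum_nonneg fun _ _ => norm_nonneg _

theorem mval_le_card_mul (P : POVM ι) (X : Matrix ι ι ℂ) :
    mval P X ≤ Fintype.card ι * ∑ p, ∑ q, ‖X q p‖ := by
  have hterm : ∀ i, ‖(P.T i * X).trace‖ ≤ (P.T i).trace.re * ∑ p, ∑ q, ‖X q p‖ := fun i =>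
    calc ‖(P.T i * X).trace‖ = ‖∑ p, ∑ q, P.T i p q * X q p‖ := by
          simp only [trace, diag_apply, mul_apply]
      _ ≤ ∑ p, ∑ q, ‖P.T i p q‖ * ‖X q p‖ := by
          refine (norm_sum_le _ _).trans (Finset.sum_le_sum fun p _ => ?_)
          exact (norm_sum_le _ _).trans_eq (Finset.sum_congr rfl fun q _ => norm_mul _ _)
      _ ≤ ∑ p, ∑ q, (P.T i).trace.re * ‖X q p‖ := by
          gcongr with p _ q _
          exact (P.pos i).norm_apply_le_trace p q
      _ = (P.T i).trace.re * ∑ p, ∑ q, ‖X q p‖ := by simp only [Finset.mul_sum]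
  have htr : ∑ i, (P.T i).trace.re = Fintype.card ι := by
    rw [← Complex.re_sum, ← trace_sum, P.sum_eq, trace_one, Complex.natCast_re]
  calc mval P X ≤ ∑ i, (P.T i).trace.re * ∑ p, ∑ q, ‖X q p‖ := Finset.sum_le_sum fun i _ => hterm i
    _ = Fintype.card ι * ∑ p, ∑ q, ‖X q p‖ := by rw [← Finset.sum_mul, htr]

theorem sSup_mval_le_sSup_mval {ι' : Type} [Fintype ι'] [DecidableEq ι']
    {A : POVM ι → Prop} {B : POVM ι' → Prop} {Y : Matrix ι ι ℂ} {X : Matrix ι' ι' ℂ}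
    (h : ∀ P, A P → ∃ Q, B Q ∧ mval P Y ≤ mval Q X) :
    sSup {r | ∃ P, A P ∧ r = mval P Y} ≤ sSup {r | ∃ Q, B Q ∧ r = mval Q X} := by
  have hbdd : BddAbove {r | ∃ Q, B Q ∧ r = mval Q X} :=
    ⟨_, by rintro _ ⟨Q, -, rfl⟩; exact mval_le_card_mul Q X⟩
  refine Real.sSup_le ?_ (Real.sSup_nonneg ?_)
  · rintro _ ⟨P, hP, rfl⟩
    obtain ⟨Q, hQ, hle⟩ := h P hP
    exact hle.trans (le_csSup hbdd ⟨Q, hQ, rfl⟩)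
  · rintro _ ⟨Q, -, rfl⟩
    exact mval_nonneg Q X

end Measurement

section KeyAttack

variable {κ₁ κ₂ α β : Type} [Fintype κ₁] [DecidableEq κ₁] [Fintype κ₂] [DecidableEq κ₂]
  [Fintype α] [DecidableEq α] [Fintype β] [DecidableEq β]

theorem trace_mul_smul_tensorBip (T : Matrix ((κ₁ × α) × (κ₂ × β)) ((κ₁ × α) × (κ₂ × β)) ℂ)
    (D : Matrix (κ₁ × κ₂) (κ₁ × κ₂) ℂ) (X : Matrix (α × β) (α × β) ℂ) :
    (T * ((Fintype.card (κ₁ × κ₂) : ℝ)⁻¹ • tensorBip D X)).trace =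
      (((2 * Fintype.card (κ₁ × κ₂) : ℝ)⁻¹ • keyTrace (1 + D) T) * X).trace -
        (((2 * Fintype.card (κ₁ × κ₂) : ℝ)⁻¹ • keyTrace (1 - D) T) * X).trace := by
  have hD : (1 + D) - (1 - D) = (2 : ℂ) • D := by module
  rw [← trace_sub, ← sub_mul, ← smul_sub, ← LinearMap.sub_apply, ← map_sub, hD, map_smul,
    LinearMap.smul_apply, smul_mul_assoc, Matrix.smul_mul, trace_smul, trace_smul,
    trace_keyTrace_mul, Matrix.mul_smul, trace_smul, Complex.real_smul, Complex.real_smul,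
    smul_eq_mul]
  push_cast
  ring

variable [Nonempty κ₁] [Nonempty κ₂]

def POVM.keyAttack (P : POVM ((κ₁ × α) × (κ₂ × β))) (D : Matrix (κ₁ × κ₂) (κ₁ × κ₂) ℂ)
    (hadd : (1 + D).PosSemidef) (hsub : (1 - D).PosSemidef) : POVM (α × β) where
  k := P.k + P.k
  T := Fin.addCases
    (fun i => (2 * Fintype.card (κ₁ × κ₂) : ℝ)⁻¹ • keyTrace (1 + D) (P.T i))
    (fun i => (2 * Fintype.card (κ₁ × κ₂) : ℝ)⁻¹ • keyTrace (1 - D) (P.T i))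
  pos i := by
    induction i using Fin.addCases <;> simp only [Fin.addCases_left, Fin.addCases_right]
    · exact (hadd.keyTrace (P.pos _)).smul (by positivity)
    · exact (hsub.keyTrace (P.pos _)).smul (by positivity)
  sum_eq := by
    have hcard : (Fintype.card (κ₁ × κ₂) : ℝ) ≠ 0 := Nat.cast_ne_zero.mpr Fintype.card_ne_zero
    rw [Fin.sum_univ_add]
    simp only [Fin.addCases_left, Fin.addCases_right, ← Finset.smul_sum, ← map_sum, P.sum_eq,
      ← smul_add, ← LinearMap.add_apply, ← map_add, add_add_sub_cancel,
      ← two_smul ℂ (1 : Matrix _ _ ℂ), map_smul, LinearMap.smul_apply, keyTrace_one_one,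
      smul_smul, ← smul_assoc, Complex.real_smul]
    push_cast
    rw [inv_mul_cancel₀ (by exact_mod_cast mul_ne_zero two_ne_zero hcard), one_smul]

theorem mval_smul_tensorBip_le_mval_keyAttack (P : POVM ((κ₁ × α) × (κ₂ × β)))
    {D : Matrix (κ₁ × κ₂) (κ₁ × κ₂) ℂ} (hadd : (1 + D).PosSemidef) (hsub : (1 - D).PosSemidef)
    (X : Matrix (α × β) (α × β) ℂ) :
    mval P ((Fintype.card (κ₁ × κ₂) : ℝ)⁻¹ • tensorBip D X) ≤
      mval (P.keyAttack D hadd hsub) X := by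
  show _ ≤ ∑ i : Fin (P.k + P.k), _
  rw [mval, Fin.sum_univ_add, ← Finset.sum_add_distrib]
  refine Finset.sum_le_sum fun i _ => ?_
  simp only [POVM.keyAttack, Fin.addCases_left, Fin.addCases_right, trace_mul_smul_tensorBip]
  exact norm_sub_le _ _

theorem keyAttack_mem_sepCone {P : POVM ((κ₁ × α) × (κ₂ × β))}
    (hP : ∀ i, P.T i ∈ SepCone (κ₁ × α) (κ₂ × β)) {D : Matrix (κ₁ × κ₂) (κ₁ × κ₂) ℂ}
    (hadd : 1 + D ∈ SepCone κ₁ κ₂) (hsub : 1 - D ∈ SepCone κ₁ κ₂) (i : Fin (P.k + P.k)) :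
    (P.keyAttack D (.of_mem_sepCone hadd) (.of_mem_sepCone hsub)).T i ∈ SepCone α β := by
  induction i using Fin.addCases <;>
    simp only [POVM.keyAttack, Fin.addCases_left, Fin.addCases_right]
  · exact smul_mem_sepCone (by positivity) (keyTrace_mem_sepCone hadd (hP _))
  · exact smul_mem_sepCone (by positivity) (keyTrace_mem_sepCone hsub (hP _))

theorem keyAttack_ptranspose_posSemidef {P : POVM ((κ₁ × α) × (κ₂ × β))}
    (hP : ∀ i, (ptranspose (P.T i)).PosSemidef) {D : Matrix (κ₁ × κ₂) (κ₁ × κ₂) ℂ}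
    (hadd : (1 + D).PosSemidef) (hsub : (1 - D).PosSemidef)
    (hadd' : (ptranspose (1 + D)).PosSemidef) (hsub' : (ptranspose (1 - D)).PosSemidef)
    (i : Fin (P.k + P.k)) : (ptranspose ((P.keyAttack D hadd hsub).T i)).PosSemidef := by
  induction i using Fin.addCases <;>
    simp only [POVM.keyAttack, Fin.addCases_left, Fin.addCases_right]
  · rw [ptranspose_smul, ptranspose_keyTrace]
    exact (hadd'.keyTrace (hP _)).smul (by positivity)
  · rw [ptranspose_smul, ptranspose_keyTrace]
    exact (hsub'.keyTrace (hP _)).smul (by positivity)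

theorem sepNorm_smul_tensorBip_le {D : Matrix (κ₁ × κ₂) (κ₁ × κ₂) ℂ}
    (hadd : 1 + D ∈ SepCone κ₁ κ₂) (hsub : 1 - D ∈ SepCone κ₁ κ₂)
    (X : Matrix (α × β) (α × β) ℂ) :
    sepNorm ((Fintype.card (κ₁ × κ₂) : ℝ)⁻¹ • tensorBip D X) ≤ sepNorm X := by
  unfold sepNorm
  exact sSup_mval_le_sSup_mval fun P hP => ⟨_, keyAttack_mem_sepCone hP hadd hsub,
    mval_smul_tensorBip_le_mval_keyAttack P _ _ X⟩

theorem pptNorm_smul_tensorBip_le {D : Matrix (κ₁ × κ₂) (κ₁ × κ₂) ℂ}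
    (hadd : (1 + D).PosSemidef) (hsub : (1 - D).PosSemidef)
    (hadd' : (ptranspose (1 + D)).PosSemidef) (hsub' : (ptranspose (1 - D)).PosSemidef)
    (X : Matrix (α × β) (α × β) ℂ) :
    pptNorm ((Fintype.card (κ₁ × κ₂) : ℝ)⁻¹ • tensorBip D X) ≤ pptNorm X := by
  unfold pptNorm
  exact sSup_mval_le_sSup_mval fun P hP =>
    ⟨_, keyAttack_ptranspose_posSemidef hP hadd hsub hadd' hsub',
      mval_smul_tensorBip_le_mval_keyAttack P hadd hsub X⟩

end KeyAttack

section Bell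

def phaseProj (s : ℂ) : Matrix (Fin 2) (Fin 2) ℂ :=
  vecMulVec ![1, s] (star ![1, s])

open Complex in
/-- Twirling over the phases `s ∈ {±1, ±i}` (`s` on `A`, `r s̄` on `B`) kills every entry
except those of `1 + r (ψ⁺ - ψ⁻)`. -/
theorem one_add_smul_bellSign_sub_eq {r : ℂ} (hr : r = 1 ∨ r = -1) :
    1 + r • (bellSign 1 - bellSign (-1)) = (4 : ℝ)⁻¹ •
      (prodOp (phaseProj 1) (phaseProj r) + prodOp (phaseProj (-1)) (phaseProj (-r)) +
        prodOp (phaseProj I) (phaseProj (-(r * I))) +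
        prodOp (phaseProj (-I)) (phaseProj (r * I))) := by
  ext ⟨c, d⟩ ⟨c', d'⟩
  simp only [Matrix.add_apply, Matrix.sub_apply, Matrix.smul_apply, prodOp, phaseProj,
    vecMulVec_apply, bellSign, one_apply, real_smul, Pi.star_apply, smul_eq_mul]
  rcases hr with rfl | rfl <;>
    fin_cases c <;> fin_cases d <;> fin_cases c' <;> fin_cases d' <;> simp <;> ring_nf

theorem one_add_smul_bellSign_sub_mem_sepCone {r : ℂ} (hr : r = 1 ∨ r = -1) :
    1 + r • (bellSign 1 - bellSign (-1)) ∈ SepCone (Fin 2) (Fin 2) := by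
  have hprod (s t : ℂ) : prodOp (phaseProj s) (phaseProj t) ∈ SepCone (Fin 2) (Fin 2) :=
    prodOp_mem_sepCone (posSemidef_vecMulVec_self_star _) (posSemidef_vecMulVec_self_star _)
  rw [one_add_smul_bellSign_sub_eq hr]
  exact smul_mem_sepCone (by norm_num) <| add_mem_sepCone
    (add_mem_sepCone (add_mem_sepCone (hprod _ _) (hprod _ _)) (hprod _ _)) (hprod _ _)

end Bell

theorem privateState_sub_keyAttacked {α β : Type} (σp σm : Matrix (α × β) (α × β) ℂ) :
    privateState σp σm - keyAttacked σp σm =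
      (Fintype.card (Fin 2 × Fin 2) : ℝ)⁻¹ •
        tensorBip (bellSign 1 - bellSign (-1)) (σp - σm) := by
  ext p q
  simp only [privateState, keyAttacked, tensorBip, Matrix.sub_apply, Matrix.add_apply,
    Matrix.smul_apply, Complex.real_smul, Fintype.card_prod, Fintype.card_fin]
  push_cast
  ring

theorem sepNorm_nonneg {α β : Type} [Fintype α] [DecidableEq α] [Fintype β] [DecidableEq β]
    (X : Matrix (α × β) (α × β) ℂ) : 0 ≤ sepNorm X :=
  Real.sSup_nonneg (by rintro _ ⟨P, -, rfl⟩; exact mval_nonneg P X)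

theorem privateState_keyAttacked_norm_bounds_general {α β : Type}
    [Fintype α] [DecidableEq α] [Fintype β] [DecidableEq β]
    (σp σm : Matrix (α × β) (α × β) ℂ) :
    sepNorm (privateState σp σm - keyAttacked σp σm) ≤ (3/2) * sepNorm (σp - σm) ∧
    pptNorm (privateState σp σm - keyAttacked σp σm) ≤ pptNorm (σp - σm) := by
  have hadd : 1 + (bellSign 1 - bellSign (-1)) ∈ SepCone (Fin 2) (Fin 2) := by
    simpa only [one_smul] using one_add_smul_bellSign_sub_mem_sepCone (Or.inl rfl)
  have hsub : 1 - (bellSign 1 - bellSign (-1)) ∈ SepCone (Fin 2) (Fin 2) := by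
    simpa only [neg_one_smul, ← sub_eq_add_neg] using
      one_add_smul_bellSign_sub_mem_sepCone (Or.inr rfl)
  rw [privateState_sub_keyAttacked]
  refine ⟨(sepNorm_smul_tensorBip_le hadd hsub _).trans ?_,
    pptNorm_smul_tensorBip_le (.of_mem_sepCone hadd) (.of_mem_sepCone hsub)
      (ptranspose_posSemidef_of_mem_sepCone hadd) (ptranspose_posSemidef_of_mem_sepCone hsub) _⟩
  linarith [sepNorm_nonneg (σp - σm)]

/-- For a private state `γ` built from orthogonal shield states `σ^±` and its
key-attacked version `γ̂`, `‖γ − γ̂‖_SEP ≤ (3/2) ‖σ⁺ − σ⁻‖_{SEP(A':B')}` and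
`‖γ − γ̂‖_PPT ≤ ‖σ⁺ − σ⁻‖_{PPT(A':B')}`. -/
theorem privateState_keyAttacked_norm_bounds {α β : Type}
    [Fintype α] [DecidableEq α] [Fintype β] [DecidableEq β]
    (σp σm : Matrix (α × β) (α × β) ℂ)
    (hp : σp.PosSemidef) (hptr : σp.trace = 1)
    (hm : σm.PosSemidef) (hmtr : σm.trace = 1)
    (horth : (σp * σm).trace = 0) :
    sepNorm (privateState σp σm - keyAttacked σp σm) ≤ (3/2) * sepNorm (σp - σm) ∧
    pptNorm (privateState σp σm - keyAttacked σp σm) ≤ pptNorm (σp - σm) :=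
  privateState_keyAttacked_norm_bounds_general σp σm

end
end

section
/- For isotropic states ρ = ι(p) and σ = ι(q) on ℂ^d ⊗ ℂ^d, the trace-norm distance restricted to local (or PPT) measurements equals 2·(d/(d+1))·|p − q|. -/
open scoped BigOperators ComplexOrder

noncomputable section

/-- The projector onto the maximally entangled vector `(1/√d) ∑ i |ii⟩` on `ℂ^d ⊗ ℂ^d`. -/
def maxEnt (d : ℕ) : Matrix (Fin d × Fin d) (Fin d × Fin d) ℂ :=
  fun p q => if p.1 = p.2 ∧ q.1 = q.2 then (d : ℂ)⁻¹ else 0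

/-- The normalized projector `ψ_⊥ = (1 − P)/(d² − 1)` orthogonal to the maximally
entangled state. -/
def psiPerp (d : ℕ) : Matrix (Fin d × Fin d) (Fin d × Fin d) ℂ :=
  (((d : ℝ)^2 - 1)⁻¹) • ((1 : Matrix (Fin d × Fin d) (Fin d × Fin d) ℂ) - maxEnt d)

/-- The isotropic state `ι(p) = p ψ + (1−p) ψ_⊥`. -/
def isoState (d : ℕ) (p : ℝ) : Matrix (Fin d × Fin d) (Fin d × Fin d) ℂ :=
  p • maxEnt d + (1 - p) • psiPerp d

/-- The trace norm restricted to local measurements (products of POVMs on each factor). -/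
def locNorm {α β : Type} [Fintype α] [DecidableEq α] [Fintype β] [DecidableEq β]
    (X : Matrix (α × β) (α × β) ℂ) : ℝ :=
  sSup {r : ℝ | ∃ (Q : POVM α) (R : POVM β),
    r = ∑ i, ∑ j, ‖(prodOp (Q.T i) (R.T j) * X).trace‖}

/-!
Since `ι(p) - ι(q) = (p - q) (ψ - ψ_⊥)`, everything reduces to `D = ψ - ψ_⊥`. For a PPT
measurement operator `T` put `a = Tr(T ψ)` and `s = Tr T`: then `Tr(T D) = (d² a - s)/(d² - 1)`,
and `d a ≤ s` because `ψᴳ = F/d` for the swap `F ≤ 1`. Over a measurement the outcomes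
`Tr(Tᵢ D)` sum to zero, so their `ℓ¹` norm is twice the sum of their positive parts, each at most
`d aᵢ/(d + 1)`, and `∑ aᵢ = 1`. Local measurements are PPT, and measuring both factors in the
standard basis attains the bound.
-/

open Matrix
open scoped Kronecker

section PositiveSemidefinite
variable {n : Type} [Fintype n] [DecidableEq n]

lemma Matrix.PosSemidef.trace_mul_nonneg {A B : Matrix n n ℂ} (hA : A.PosSemidef)
    (hB : B.PosSemidef) : 0 ≤ (A * B).trace := by
  open scoped MatrixOrder in
  obtain ⟨C, rfl⟩ := CStarAlgebra.nonneg_iff_eq_star_mul_self.mp hB.nonneg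
  rw [star_eq_conjTranspose, ← Matrix.mul_assoc, trace_mul_comm, ← Matrix.mul_assoc]
  exact (hA.mul_mul_conjTranspose_same C).trace_nonneg

lemma posSemidef_one_sub_of_involutive {S : Matrix n n ℂ} (hS : Sᴴ = S) (hSS : S * S = 1) :
    (1 - S).PosSemidef := by
  have h : 1 - S = (2⁻¹ : ℝ) • ((1 - S)ᴴ * (1 - S)) := by
    rw [conjTranspose_sub, conjTranspose_one, hS, sub_mul, mul_sub, mul_sub, hSS]
    simp only [one_mul, mul_one]
    module
  rw [h]
  exact (posSemidef_conjTranspose_mul_self _).smul (by norm_num)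

end PositiveSemidefinite

section TensorProduct
variable {α β : Type}

lemma prodOp_eq_kronecker (x : Matrix α α ℂ) (y : Matrix β β ℂ) : prodOp x y = x ⊗ₖ y := rfl

lemma sum_sum_prodOp {ι κ : Type} [Fintype ι] [Fintype κ] (x : ι → Matrix α α ℂ)
    (y : κ → Matrix β β ℂ) : ∑ i, ∑ j, prodOp (x i) (y j) = prodOp (∑ i, x i) (∑ j, y j) := by
  ext p q
  simp only [Matrix.sum_apply, prodOp, Finset.sum_mul_sum]

lemma ptranspose_prodOp (x : Matrix α α ℂ) (y : Matrix β β ℂ) :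
    ptranspose (prodOp x y) = prodOp x yᵀ := rfl

variable [Fintype α] [Fintype β]

lemma trace_ptranspose (A : Matrix (α × β) (α × β) ℂ) : (ptranspose A).trace = A.trace := rfl

lemma trace_ptranspose_mul_ptranspose (A B : Matrix (α × β) (α × β) ℂ) :
    (ptranspose A * ptranspose B).trace = (A * B).trace := by
  simp only [trace, diag, mul_apply, ptranspose, Fintype.sum_prod_type]
  refine Finset.sum_congr rfl fun a _ => ?_
  rw [Finset.sum_comm]
  exact (Finset.sum_congr rfl fun c _ => Finset.sum_comm).trans Finset.sum_comm

end TensorProduct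

def swapOp (α : Type) [DecidableEq α] : Matrix (α × α) (α × α) ℂ :=
  Matrix.of fun p q => if p = q.swap then 1 else 0

section Swap
variable {α : Type} [DecidableEq α]

lemma conjTranspose_swapOp : (swapOp α)ᴴ = swapOp α := by
  ext p q
  by_cases h : p = q.swap
  · simp [swapOp, h]
  · simpa [swapOp, h] using fun h' => h (by rw [h', Prod.swap_swap])

lemma swapOp_mul_self [Fintype α] : swapOp α * swapOp α = 1 := by
  ext p q
  simp [swapOp, mul_apply, one_apply]

end Swap

lemma mval_real_smul {ι : Type} [Fintype ι] [DecidableEq ι] (P : POVM ι) (c : ℝ)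
    (X : Matrix ι ι ℂ) : mval P (c • X) = |c| * mval P X := by
  simp only [mval, Finset.mul_sum, Matrix.mul_smul, trace_smul, norm_smul, Real.norm_eq_abs]

namespace POVM
variable {α β : Type} [Fintype α] [DecidableEq α] [Fintype β] [DecidableEq β]

/-- The product of two measurements, its outcomes indexed through
`finProdFinEquiv : Fin Q.k × Fin R.k ≃ Fin (Q.k * R.k)`. -/
def prod (Q : POVM α) (R : POVM β) : POVM (α × β) where
  k := Q.k * R.k
  T i := prodOp (Q.T (finProdFinEquiv.symm i).1) (R.T (finProdFinEquiv.symm i).2)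
  pos i := (Q.pos _).kronecker (R.pos _)
  sum_eq := by
    rw [finProdFinEquiv.symm.sum_comp (fun ij => prodOp (Q.T ij.1) (R.T ij.2)),
      Fintype.sum_prod_type, sum_sum_prodOp, Q.sum_eq, R.sum_eq, prodOp_eq_kronecker,
      one_kronecker_one]

lemma mval_prod (Q : POVM α) (R : POVM β) (X : Matrix (α × β) (α × β) ℂ) :
    mval (Q.prod R) X = ∑ i, ∑ j, ‖(prodOp (Q.T i) (R.T j) * X).trace‖ := by
  rw [mval, ← Fintype.sum_prod_type']
  exact finProdFinEquiv.symm.sum_comp (fun ij => ‖(prodOp (Q.T ij.1) (R.T ij.2) * X).trace‖)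

lemma posSemidef_ptranspose_prod_T (Q : POVM α) (R : POVM β) (i : Fin (Q.prod R).k) :
    (ptranspose ((Q.prod R).T i)).PosSemidef :=
  (Q.pos _).kronecker (R.pos _).transpose

def stdBasis (n : ℕ) : POVM (Fin n) where
  k := n
  T i := single i i 1
  pos i := by
    rw [← diagonal_single]
    exact PosSemidef.diagonal (Pi.single_nonneg.mpr zero_le_one)
  sum_eq := by rw [sum_single_eq_diagonal, diagonal_one]

lemma mval_prod_stdBasis (m n : ℕ) (X : Matrix (Fin m × Fin n) (Fin m × Fin n) ℂ) :
    mval ((stdBasis m).prod (stdBasis n)) X = ∑ i, ∑ j, ‖X (i, j) (i, j)‖ := by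
  rw [mval_prod]
  simp only [stdBasis]
  simp_rw [prodOp_eq_kronecker, single_kronecker_single, trace_single_mul, one_mul, one_smul]
  rfl

end POVM

lemma Finset.sum_abs_eq_two_mul_sum_posPart {ι : Type} (s : Finset ι) (γ : ι → ℝ)
    (hγ : ∑ i ∈ s, γ i = 0) : ∑ i ∈ s, |γ i| = 2 * ∑ i ∈ s, (γ i)⁺ := by
  have h (x : ℝ) : |x| = 2 * x⁺ - x := by
    linarith [posPart_add_negPart x, posPart_sub_negPart x]
  simp_rw [h, Finset.sum_sub_distrib, hγ, Finset.mul_sum, sub_zero]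

lemma sum_abs_le_of_mul_le {ι : Type} [Fintype ι] {D : ℝ} (hD : 1 < D) (a s : ι → ℝ)
    (ha : ∀ i, 0 ≤ a i) (has : ∀ i, D * a i ≤ s i) (hsuma : ∑ i, a i = 1)
    (hsums : ∑ i, s i = D ^ 2) :
    ∑ i, |(D ^ 2 * a i - s i) / (D ^ 2 - 1)| ≤ 2 * (D / (D + 1)) := by
  have hD2 : 0 < D ^ 2 - 1 := by nlinarith
  have hsum : ∑ i, (D ^ 2 * a i - s i) / (D ^ 2 - 1) = 0 := by
    rw [← Finset.sum_div, Finset.sum_sub_distrib, ← Finset.mul_sum, hsuma, hsums, mul_one,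
      sub_self, zero_div]
  have hpos (i : ι) : ((D ^ 2 * a i - s i) / (D ^ 2 - 1))⁺ ≤ D / (D + 1) * a i := by
    rw [posPart_def]
    refine sup_le ?_ (by have := ha i; positivity)
    have hfactor : D / (D + 1) * a i * (D ^ 2 - 1) = D ^ 2 * a i - D * a i := by
      field_simp
      ring
    rw [div_le_iff₀ hD2, hfactor]
    linarith [has i]
  rw [Finset.sum_abs_eq_two_mul_sum_posPart _ _ hsum]
  calc 2 * ∑ i, ((D ^ 2 * a i - s i) / (D ^ 2 - 1))⁺
      ≤ 2 * ∑ i, D / (D + 1) * a i := by gcongr with i; exact hpos i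
    _ = 2 * (D / (D + 1)) := by rw [← Finset.mul_sum, hsuma, mul_one]

section MaxEnt
variable {d : ℕ}

lemma natCast_sq_sub_one_ne_zero (hd : 2 ≤ d) : (d : ℂ) ^ 2 - 1 ≠ 0 :=
  sub_ne_zero.mpr (by exact_mod_cast (Nat.one_lt_pow two_ne_zero hd).ne')

lemma conjTranspose_maxEnt : (maxEnt d)ᴴ = maxEnt d := by
  ext p q
  by_cases h : p.1 = p.2 ∧ q.1 = q.2 <;> simp [maxEnt, h, and_comm]

lemma maxEnt_mul_self (hd : d ≠ 0) : maxEnt d * maxEnt d = maxEnt d := by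
  ext ⟨i, j⟩ ⟨k, l⟩
  rw [mul_apply, Fintype.sum_prod_type]
  by_cases hij : i = j <;> by_cases hkl : k = l
  · simp [maxEnt, hij, hkl]
    field_simp
  all_goals simp [maxEnt, hij, hkl]

lemma posSemidef_maxEnt (hd : d ≠ 0) : (maxEnt d).PosSemidef := by
  simpa only [conjTranspose_maxEnt, maxEnt_mul_self hd] using
    posSemidef_conjTranspose_mul_self (maxEnt d)

lemma trace_maxEnt (hd : d ≠ 0) : (maxEnt d).trace = 1 := by
  simp [trace, maxEnt, Fintype.sum_prod_type]
  field_simp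

lemma ptranspose_maxEnt : ptranspose (maxEnt d) = (d : ℂ)⁻¹ • swapOp (Fin d) := by
  ext ⟨i, j⟩ ⟨k, l⟩
  by_cases h1 : i = l <;> by_cases h2 : j = k <;>
    simp [ptranspose, maxEnt, swapOp, h1, h2, eq_comm]

/-- `Tr(T ψ) = Tr(Tᴳ F)/d` with `F` the swap, and `F ≤ 1`. -/
lemma natCast_mul_trace_mul_maxEnt_le_trace (hd : d ≠ 0)
    {T : Matrix (Fin d × Fin d) (Fin d × Fin d) ℂ} (hT : (ptranspose T).PosSemidef) :
    (d : ℂ) * (T * maxEnt d).trace ≤ T.trace := by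
  have hF : 0 ≤ (ptranspose T * (1 - swapOp (Fin d))).trace :=
    hT.trace_mul_nonneg (posSemidef_one_sub_of_involutive conjTranspose_swapOp swapOp_mul_self)
  have hTψ : (d : ℂ) * (T * maxEnt d).trace = (ptranspose T * swapOp (Fin d)).trace := by
    rw [← trace_ptranspose_mul_ptranspose, ptranspose_maxEnt, Matrix.mul_smul, trace_smul,
      smul_eq_mul, ← mul_assoc, mul_inv_cancel₀ (Nat.cast_ne_zero.mpr hd), one_mul]
  rw [mul_sub, trace_sub, mul_one, trace_ptranspose, sub_nonneg] at hF
  rwa [hTψ]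

lemma trace_mul_maxEnt_sub_psiPerp (hd : 2 ≤ d) (T : Matrix (Fin d × Fin d) (Fin d × Fin d) ℂ) :
    (T * (maxEnt d - psiPerp d)).trace
      = ((d : ℂ) ^ 2 * (T * maxEnt d).trace - T.trace) / ((d : ℂ) ^ 2 - 1) := by
  have hd' := natCast_sq_sub_one_ne_zero hd
  rw [psiPerp, mul_sub, trace_sub, Matrix.mul_smul, trace_smul, mul_sub, trace_sub, mul_one,
    Complex.real_smul]
  push_cast
  field_simp
  ring

lemma maxEnt_sub_psiPerp_apply_self (hd : 2 ≤ d) (i j : Fin d) :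
    (maxEnt d - psiPerp d) (i, j) (i, j)
      = if i = j then ((d : ℂ) + 1)⁻¹ else -((d : ℂ) ^ 2 - 1)⁻¹ := by
  have hd' := natCast_sq_sub_one_ne_zero hd
  by_cases h : i = j
  · simp [maxEnt, psiPerp, h, Complex.real_smul]
    field_simp
    ring
  · simp [maxEnt, psiPerp, h, Complex.real_smul, one_apply]

end MaxEnt

section IsotropicStates
variable {d : ℕ}

lemma isoState_sub_isoState (p q : ℝ) :
    isoState d p - isoState d q = (p - q) • (maxEnt d - psiPerp d) := by
  unfold isoState
  module

lemma sum_norm_trace_mul_maxEnt_sub_psiPerp_le (hd : 2 ≤ d) {ι : Type} [Fintype ι]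
    (T : ι → Matrix (Fin d × Fin d) (Fin d × Fin d) ℂ) (hpos : ∀ i, (T i).PosSemidef)
    (hppt : ∀ i, (ptranspose (T i)).PosSemidef) (hsum : ∑ i, T i = 1) :
    ∑ i, ‖(T i * (maxEnt d - psiPerp d)).trace‖ ≤ 2 * ((d : ℝ) / (d + 1)) := by
  have hd0 : d ≠ 0 := by omega
  set a : ι → ℝ := fun i => (T i * maxEnt d).trace.re
  set s : ι → ℝ := fun i => (T i).trace.re
  have ha_nonneg (i : ι) : 0 ≤ (T i * maxEnt d).trace :=
    (hpos i).trace_mul_nonneg (posSemidef_maxEnt hd0)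
  have ha (i : ι) : (T i * maxEnt d).trace = a i :=
    Complex.eq_re_of_ofReal_le (r := 0) (by simpa only [Complex.ofReal_zero] using ha_nonneg i)
  have hs (i : ι) : (T i).trace = s i :=
    Complex.eq_re_of_ofReal_le (r := 0)
      (by simpa only [Complex.ofReal_zero] using (hpos i).trace_nonneg)
  have hsuma : ∑ i, a i = 1 := by
    have h : ∑ i, (T i * maxEnt d).trace = 1 := by
      rw [← trace_sum, ← Finset.sum_mul, hsum, Matrix.one_mul, trace_maxEnt hd0]
    simp only [a, ← Complex.re_sum, h, Complex.one_re]
  have hsums : ∑ i, s i = (d : ℝ) ^ 2 := by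
    have h : ∑ i, (T i).trace = (d : ℂ) ^ 2 := by
      rw [← trace_sum, hsum, trace_one]
      simp [sq]
    simp only [s, ← Complex.re_sum, h]
    norm_cast
  have has (i : ι) : (d : ℝ) * a i ≤ s i := by
    have h := natCast_mul_trace_mul_maxEnt_le_trace hd0 (hppt i)
    rw [ha, hs] at h
    exact_mod_cast h
  have hnorm (i : ι) : ‖(T i * (maxEnt d - psiPerp d)).trace‖
      = |((d : ℝ) ^ 2 * a i - s i) / ((d : ℝ) ^ 2 - 1)| := by
    rw [trace_mul_maxEnt_sub_psiPerp hd, ha, hs, ← Real.norm_eq_abs, ← Complex.norm_real]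
    push_cast
    rfl
  simp_rw [hnorm]
  exact sum_abs_le_of_mul_le (by exact_mod_cast hd) a s
    (fun i => by simpa [ha] using ha_nonneg i) has hsuma hsums

lemma sum_norm_maxEnt_sub_psiPerp_apply_self (hd : 2 ≤ d) :
    ∑ i : Fin d, ∑ j : Fin d, ‖(maxEnt d - psiPerp d) (i, j) (i, j)‖
      = 2 * ((d : ℝ) / (d + 1)) := by
  have hd' : 0 < (d : ℝ) ^ 2 - 1 := by
    have : (2 : ℝ) ≤ d := by exact_mod_cast hd
    nlinarith
  have hentry (i j : Fin d) : ‖(maxEnt d - psiPerp d) (i, j) (i, j)‖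
      = ((d : ℝ) ^ 2 - 1)⁻¹ + if i = j then ((d : ℝ) + 1)⁻¹ - ((d : ℝ) ^ 2 - 1)⁻¹ else 0 := by
    rw [maxEnt_sub_psiPerp_apply_self hd]
    split_ifs
    · rw [add_sub_cancel, norm_inv, ← Nat.cast_succ, Complex.norm_natCast, Nat.cast_succ]
    · rw [add_zero, norm_neg, norm_inv, ← Complex.ofReal_natCast, ← Complex.ofReal_pow,
        ← Complex.ofReal_one, ← Complex.ofReal_sub, Complex.norm_real, Real.norm_of_nonneg hd'.le]
  simp only [hentry, Finset.sum_add_distrib, Finset.sum_ite_eq, Finset.mem_univ, if_true,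
    Finset.sum_const, Finset.card_univ, Fintype.card_fin, nsmul_eq_mul]
  field_simp
  ring

lemma mval_isoState_sub_le (hd : 2 ≤ d) (P : POVM (Fin d × Fin d))
    (hP : ∀ i, (ptranspose (P.T i)).PosSemidef) (p q : ℝ) :
    mval P (isoState d p - isoState d q) ≤ 2 * ((d : ℝ) / (d + 1)) * |p - q| := by
  rw [isoState_sub_isoState, mval_real_smul, mul_comm]
  gcongr
  exact sum_norm_trace_mul_maxEnt_sub_psiPerp_le hd P.T P.pos hP P.sum_eq

lemma mval_prod_stdBasis_isoState_sub (hd : 2 ≤ d) (p q : ℝ) :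
    mval ((POVM.stdBasis d).prod (POVM.stdBasis d)) (isoState d p - isoState d q)
      = 2 * ((d : ℝ) / (d + 1)) * |p - q| := by
  rw [isoState_sub_isoState, mval_real_smul, POVM.mval_prod_stdBasis,
    sum_norm_maxEnt_sub_psiPerp_apply_self hd, mul_comm]

end IsotropicStates

theorem isoState_locNorm_pptNorm_general (d : ℕ) (hd : 2 ≤ d) (p q : ℝ) :
    locNorm (isoState d p - isoState d q) = 2 * ((d : ℝ) / (d + 1)) * |p - q| ∧
    pptNorm (isoState d p - isoState d q) = 2 * ((d : ℝ) / (d + 1)) * |p - q| := by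
  have hval := mval_prod_stdBasis_isoState_sub hd p q
  constructor
  · refine IsGreatest.csSup_eq ⟨⟨POVM.stdBasis d, POVM.stdBasis d, ?_⟩, ?_⟩
    · rw [← POVM.mval_prod, hval]
    · rintro r ⟨Q, R, rfl⟩
      rw [← POVM.mval_prod]
      exact mval_isoState_sub_le hd _ (POVM.posSemidef_ptranspose_prod_T Q R) p q
  · refine IsGreatest.csSup_eq ⟨⟨_, POVM.posSemidef_ptranspose_prod_T _ _, hval.symm⟩, ?_⟩
    rintro r ⟨P, hP, rfl⟩
    exact mval_isoState_sub_le hd P hP p q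

/-- For isotropic states `ρ = ι(p)` and `σ = ι(q)` on `ℂ^d ⊗ ℂ^d`, the
trace-norm distance restricted to local (or PPT) measurements equals
`2 (d/(d+1)) |p − q|`. -/
theorem isoState_locNorm_pptNorm (d : ℕ) (hd : 2 ≤ d) (p q : ℝ)
    (hp : p ∈ Set.Icc (0:ℝ) 1) (hq : q ∈ Set.Icc (0:ℝ) 1) :
    locNorm (isoState d p - isoState d q) = 2 * ((d : ℝ) / (d + 1)) * |p - q| ∧
    pptNorm (isoState d p - isoState d q) = 2 * ((d : ℝ) / (d + 1)) * |p - q| :=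
  isoState_locNorm_pptNorm_general d hd p q

end
end
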